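/- There is an instance of allocating indivisible goods in which a competitive equilibrium exists, yet no competitive-equilibrium allocation is Pareto optimal. Concretely, take 3 agents and 3 items e_1, e_2, e_3 with additive valuations v_1 = (1, 1, 1), v_2 = (2, 1, 1), v_3 = (2, 1, 1) (listing item values in order) and entitlement vector b = (0.4, 0.3, 0.3). Then the allocation ({e_1}, {e_2}, {e_3}) is a competitive equilibrium (e.g. with prices (0.4, 0.3, 0.3)), and every competitive-equilibrium allocation of this instance is Pareto dominated by some allocation (in particular ({e_1}, {e_2}, {e_3}) and ({e_1}, {e_3}, {e_2}) are Pareto dominated by ({e_2}, {e_1}, {e_3}) and ({e_2}, {e_3}, {e_1}) respectively). -/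

import Mathlib

/-!
Every agent values every item positively, so in a competitive equilibrium no bundle is empty:
an empty bundle pushes every price above that agent's budget, which the budgets 0.4, 0.3, 0.3
cannot absorb. With three items the bundles are therefore singletons. Item e₁ must go to
agent 1: otherwise it costs at most 0.3, and whichever of agents 2, 3 does not hold it values it
at 2 against the 1 of its own item and would demand it. Only ({e₁},{e₂},{e₃}) and
({e₁},{e₃},{e₂}) remain, and handing e₁ to agent 2 or 3 instead makes that agent strictly better
off at no cost to agent 1, who is indifferent between items. In Lean, agents and items are
indexed from 0, so e₁ is item 0 and agent 1 is agent 0.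
-/

namespace Stmt16

/-- A partition of the items into (possibly empty) bundles. -/
def IsPartition {n m : ℕ} (A : Fin n → Finset (Fin m)) : Prop :=
  (∀ i j, i ≠ j → Disjoint (A i) (A j)) ∧ ∀ e, ∃ i, e ∈ A i

/-- Additive value of a bundle. -/
def bval {m : ℕ} (w : Fin m → ℝ) (S : Finset (Fin m)) : ℝ := ∑ e ∈ S, w e

/-- The additive valuations: v₁ = (1,1,1), v₂ = (2,1,1), v₃ = (2,1,1). -/
def v : Fin 3 → Fin 3 → ℝ := ![![1, 1, 1], ![2, 1, 1], ![2, 1, 1]]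

/-- Entitlement vector b = (0.4, 0.3, 0.3). -/
noncomputable def b : Fin 3 → ℝ := ![0.4, 0.3, 0.3]

/-- A competitive-equilibrium allocation under entitlements `b`. -/
noncomputable def CE (A : Fin 3 → Finset (Fin 3)) : Prop :=
  IsPartition A ∧ ∃ p : Fin 3 → ℝ, (∀ e, 0 ≤ p e) ∧
    ∀ i, (∑ e ∈ A i, p e ≤ b i) ∧
      ∀ S : Finset (Fin 3), (∑ e ∈ S, p e) ≤ b i → bval (v i) S ≤ bval (v i) (A i)

/-- `B` Pareto dominates `A`. -/
def Dominates (B A : Fin 3 → Finset (Fin 3)) : Prop :=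
  (∀ i, bval (v i) (A i) ≤ bval (v i) (B i)) ∧ ∃ i, bval (v i) (A i) < bval (v i) (B i)

theorem IsPartition.sum_card {n m : ℕ} {A : Fin n → Finset (Fin m)} (hA : IsPartition A) :
    ∑ i, (A i).card = m := by
  classical
  have hcover : Finset.univ.biUnion A = Finset.univ :=
    Finset.eq_univ_of_forall fun e => by
      obtain ⟨i, hi⟩ := hA.2 e
      exact Finset.mem_biUnion.2 ⟨i, Finset.mem_univ i, hi⟩
  rw [← Finset.card_biUnion fun i _ j _ hij => hA.1 i j hij, hcover, Finset.card_univ,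
    Fintype.card_fin]

theorem IsPartition.exists_injective_eq_singleton {n : ℕ} {A : Fin n → Finset (Fin n)}
    (hA : IsPartition A) (hne : ∀ i, (A i).Nonempty) :
    ∃ σ : Fin n → Fin n, Function.Injective σ ∧ A = fun i => {σ i} := by
  have hcard : ∀ i, (A i).card = 1 := by
    have hsum : ∑ _i : Fin n, 1 = ∑ i, (A i).card := by simp [hA.sum_card]
    exact fun i => ((Finset.sum_eq_sum_iff_of_le fun i _ => (hne i).card_pos).1 hsum i
      (Finset.mem_univ i)).symm
  choose σ hσ using fun i => Finset.card_eq_one.1 (hcard i)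
  refine ⟨σ, fun i j hij => ?_, funext hσ⟩
  by_contra hne
  have := hA.1 i j hne
  rw [hσ i, hσ j, hij] at this
  simp at this

theorem one_le_v (i e : Fin 3) : 1 ≤ v i e := by
  fin_cases i <;> fin_cases e <;> norm_num [v]

theorem v_lt_v_zero {i e : Fin 3} (hi : i ≠ 0) (he : e ≠ 0) : v i e < v i 0 := by
  fin_cases i <;> fin_cases e <;> simp_all [v]

theorem b_le (i : Fin 3) : b i ≤ 0.4 := by
  fin_cases i <;> norm_num [b]

theorem b_of_ne_zero {i : Fin 3} (hi : i ≠ 0) : b i = 0.3 := by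
  fin_cases i <;> simp_all [b]

def IsEquilibriumPrice (A : Fin 3 → Finset (Fin 3)) (p : Fin 3 → ℝ) : Prop :=
  (∀ e, 0 ≤ p e) ∧ ∀ i, (∑ e ∈ A i, p e ≤ b i) ∧
    ∀ S : Finset (Fin 3), (∑ e ∈ S, p e) ≤ b i → bval (v i) S ≤ bval (v i) (A i)

namespace IsEquilibriumPrice

variable {A : Fin 3 → Finset (Fin 3)} {p : Fin 3 → ℝ}

theorem price_le (h : IsEquilibriumPrice A p) {i e : Fin 3} (he : e ∈ A i) : p e ≤ b i :=
  (Finset.single_le_sum (fun e _ => h.1 e) he).trans (h.2 i).1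

theorem v_le_of_price_le (h : IsEquilibriumPrice A p) {i e : Fin 3} (he : p e ≤ b i) :
    v i e ≤ bval (v i) (A i) := by
  simpa [bval] using (h.2 i).2 {e} (by simpa using he)

theorem b_lt_price_of_eq_empty (h : IsEquilibriumPrice A p) {i : Fin 3} (hi : A i = ∅)
    (e : Fin 3) : b i < p e := by
  by_contra! he
  have := h.v_le_of_price_le he
  rw [hi] at this
  linarith [one_le_v i e, show bval (v i) ∅ = 0 from Finset.sum_empty]

-- If agent `i` holds nothing, every price exceeds `b i`: for `b i = 0.4` no item is affordable to
-- anyone, and for `b i = 0.3` all items, together costing more than 0.9, must sit with agent 0.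
theorem nonempty (h : IsEquilibriumPrice A p) (hA : IsPartition A) (i : Fin 3) :
    (A i).Nonempty := by
  rw [Finset.nonempty_iff_ne_empty]
  intro hi
  have hlt := h.b_lt_price_of_eq_empty hi
  by_cases hi0 : i = 0
  · subst hi0
    obtain ⟨j, hj⟩ := hA.2 0
    linarith [h.price_le hj, b_le j, hlt 0, show b 0 = 0.4 by norm_num [b]]
  · rw [b_of_ne_zero hi0] at hlt
    have hA0 : A 0 = Finset.univ := Finset.eq_univ_of_forall fun e => by
      obtain ⟨j, hj⟩ := hA.2 e
      by_cases hj0 : j = 0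
      · exact hj0 ▸ hj
      · exact absurd (h.price_le hj) (by rw [b_of_ne_zero hj0]; linarith [hlt e])
    have hcost := (h.2 0).1
    rw [hA0, Fin.sum_univ_three] at hcost
    linarith [hlt 0, hlt 1, hlt 2, b_le 0]

theorem map_zero_eq_zero {σ : Fin 3 → Fin 3}
    (hσ : Function.Injective σ) (h : IsEquilibriumPrice (fun i => {σ i}) p) : σ 0 = 0 := by
  obtain ⟨j, hj⟩ := Finite.surjective_of_injective hσ 0
  obtain ⟨k, hk0, hkj⟩ : ∃ k, k ≠ 0 ∧ k ≠ j := by fin_cases j <;> decide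
  by_contra hne
  have hj0 : j ≠ 0 := by rintro rfl; exact hne hj
  have hcheap : p 0 ≤ b k := by
    simpa [hj, b_of_ne_zero hj0, b_of_ne_zero hk0] using h.price_le (i := j) (e := 0)
  have hdemand : v k 0 ≤ v k (σ k) := by
    simpa [bval] using h.v_le_of_price_le hcheap
  have hσk : σ k ≠ 0 := fun hk => hkj (hσ (hk.trans hj.symm))
  linarith [v_lt_v_zero hk0 hσk]

end IsEquilibriumPrice

theorem eq_of_ce {A : Fin 3 → Finset (Fin 3)} (hA : CE A) :
    A = ![{0}, {1}, {2}] ∨ A = ![{0}, {2}, {1}] := by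
  obtain ⟨hpart, p, hp : IsEquilibriumPrice A p⟩ := hA
  obtain ⟨σ, hσ, rfl⟩ := hpart.exists_injective_eq_singleton (hp.nonempty hpart)
  have h0 := hp.map_zero_eq_zero hσ
  clear hp hpart
  revert σ
  decide

theorem ce_singleton : CE ![{0}, {1}, {2}] := by
  refine ⟨by unfold IsPartition; decide, b, fun e => ?_, fun i => ⟨?_, fun S hS => ?_⟩⟩
  · fin_cases e <;> norm_num [b]
  · fin_cases i <;> simp
  · revert hS
    fin_cases i <;> fin_cases S <;> norm_num [bval, v, b, Finset.sum_insert, Matrix.cons_val_two]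

theorem dominates_swap_zero_one : Dominates ![{1}, {0}, {2}] ![{0}, {1}, {2}] :=
  ⟨fun i => by fin_cases i <;> norm_num [bval, v], 1, by norm_num [bval, v]⟩

theorem dominates_cycle : Dominates ![{1}, {2}, {0}] ![{0}, {2}, {1}] :=
  ⟨fun i => by fin_cases i <;> norm_num [bval, v], 2, by simp [bval, v]⟩

/-- a competitive equilibrium exists — ({e₁},{e₂},{e₃}) is a CE —
yet every CE allocation is Pareto dominated by some allocation; in particular
({e₁},{e₂},{e₃}) and ({e₁},{e₃},{e₂}) are Pareto dominated by ({e₂},{e₁},{e₃})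
and ({e₂},{e₃},{e₁}) respectively. -/
theorem stmt_16 :
    CE ![{0}, {1}, {2}] ∧
    (∀ A, CE A → ∃ B, IsPartition B ∧ Dominates B A) ∧
    Dominates ![{1}, {0}, {2}] ![{0}, {1}, {2}] ∧
    Dominates ![{1}, {2}, {0}] ![{0}, {2}, {1}] := by
  refine ⟨ce_singleton, fun A hA => ?_, dominates_swap_zero_one, dominates_cycle⟩
  rcases eq_of_ce hA with rfl | rfl
  · exact ⟨_, by unfold IsPartition; decide, dominates_swap_zero_one⟩
  · exact ⟨_, by unfold IsPartition; decide, dominates_cycle⟩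

end Stmt16
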